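/- (Integrating a logarithmic-scale singularity through scattering.) With the scattering setup of the previous statement (velocities bounded by R > 1, δ ∈ (0,1), v_i obtained from (v*,ν*) by the scattering formula), one has ∫ min(δ/|v_i - v_j|, 1) |(v* - v̄_i)·ν*| dv* dν* ≤ C R² δ |log δ| + C R³ δ. -/

import Mathlib

open MeasureTheory Metric
open scoped RealInnerProductSpace

noncomputable section

/-- The plane `ℝ²`. -/
abbrev E2 : Type := EuclideanSpace ℝ (Fin 2)

/-- The surface measure on the unit circle `𝕊¹ ⊂ ℝ²`. -/
def sphμ : Measure (sphere (0 : E2) 1) := (volume : Measure E2).toSphere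

/-- The post-collisional velocity `v_i = v* - ((v* - v̄_i)·ν*) ν*`. -/
def scat (vbar v : E2) (ν : E2) : E2 := v - ⟪v - vbar, ν⟫ • ν

/-!
Fix the direction `ν` and a unit vector `p ⟂ ν`. Scattering moves `v` only along `ν`, so
`⟪v_i - v_j, p⟫ = ⟪v - v_j, p⟫` and `|v_i - v_j| ≥ |⟪v - v_j, p⟫|`. The integrand is therefore at
most `2R · min(δ / |⟪v - v_j, p⟫|, 1)`, which depends on one coordinate of `v` only: integrating
out the other coordinate costs a factor `2R`, and
`∫_{-2R}^{2R} min(δ/|u|, 1) du = 2δ(1 + log(2R/δ))`. The integral over `ν ∈ 𝕊¹` adds a factor `2π`.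
-/

open Real Set Module

/-- The kernel `min(δ/|u|, 1)`, in a form that is `1` rather than `0` at `u = 0`. -/
def cutoffInv (δ u : ℝ) : ℝ := δ / max |u| δ

section cutoffInv

variable {δ : ℝ}

lemma cutoffInv_nonneg (hδ : 0 ≤ δ) (u : ℝ) : 0 ≤ cutoffInv δ u :=
  div_nonneg hδ (le_max_of_le_right hδ)

lemma cutoffInv_of_abs_le {u : ℝ} (hu : |u| ≤ δ) (hδ : 0 < δ) : cutoffInv δ u = 1 := by
  rw [cutoffInv, max_eq_right hu, div_self hδ.ne']

lemma cutoffInv_of_le_abs {u : ℝ} (hu : δ ≤ |u|) : cutoffInv δ u = δ / |u| := by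
  rw [cutoffInv, max_eq_left hu]

lemma continuous_cutoffInv (hδ : 0 < δ) : Continuous (cutoffInv δ) :=
  continuous_const.div (continuous_abs.max continuous_const) fun _ =>
    (hδ.trans_le (le_max_right _ _)).ne'

lemma min_div_le_cutoffInv (hδ : 0 < δ) {u x : ℝ} (hux : |u| ≤ x) :
    min (δ / x) 1 ≤ cutoffInv δ u := by
  rcases le_total x δ with hx | hx
  · rw [cutoffInv_of_abs_le (hux.trans hx) hδ]
    exact min_le_right _ _
  · exact (min_le_left _ _).trans
      (div_le_div_of_nonneg_left hδ.le (hδ.trans_le (le_max_right _ _)) (max_le hux hx))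

lemma integral_cutoffInv (hδ : 0 < δ) {M : ℝ} (hM : δ ≤ M) :
    ∫ u in -M..M, cutoffInv δ u = 2 * δ * (1 + log (M / δ)) := by
  have hint : ∀ a b, IntervalIntegrable (cutoffInv δ) volume a b := fun a b =>
    (continuous_cutoffInv hδ).intervalIntegrable a b
  have hinner : ∫ u in (0)..δ, cutoffInv δ u = δ := by
    rw [intervalIntegral.integral_congr (g := fun _ => 1), intervalIntegral.integral_const,
      smul_eq_mul, mul_one, sub_zero]
    intro u hu
    rw [uIcc_of_le hδ.le] at hu
    exact cutoffInv_of_abs_le (abs_le.2 ⟨by linarith [hu.1], hu.2⟩) hδ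
  have houter : ∫ u in δ..M, cutoffInv δ u = δ * log (M / δ) := by
    rw [intervalIntegral.integral_congr (g := fun u => δ * u⁻¹),
      intervalIntegral.integral_const_mul, integral_inv_of_pos hδ (hδ.trans_le hM)]
    intro u hu
    rw [uIcc_of_le hM] at hu
    rw [cutoffInv_of_le_abs (hu.1.trans (le_abs_self u)), abs_of_pos (hδ.trans_le hu.1),
      div_eq_mul_inv]
  have hhalf : ∫ u in (0)..M, cutoffInv δ u = δ * (1 + log (M / δ)) := by
    rw [← intervalIntegral.integral_add_adjacent_intervals (hint 0 δ) (hint δ M), hinner, houter]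
    ring
  have heven : ∫ u in -M..0, cutoffInv δ u = ∫ u in (0)..M, cutoffInv δ u := by
    simpa only [neg_zero, cutoffInv, abs_neg] using
      (intervalIntegral.integral_comp_neg (a := 0) (b := M) (cutoffInv δ)).symm
  rw [← intervalIntegral.integral_add_adjacent_intervals (hint (-M) 0) (hint 0 M), heven, hhalf]
  ring

lemma integral_cutoffInv_sub_le (hδ : 0 < δ) {R c : ℝ} (hc : |c| ≤ R) (hδR : δ ≤ 2 * R) :
    ∫ t in -R..R, cutoffInv δ (t - c) ≤ 2 * δ * (1 + log (2 * R / δ)) := by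
  obtain ⟨hc₁, hc₂⟩ := abs_le.1 hc
  rw [intervalIntegral.integral_comp_sub_right, ← integral_cutoffInv hδ hδR]
  exact intervalIntegral.integral_mono_interval (by linarith) (by linarith) (by linarith)
    (Filter.Eventually.of_forall (cutoffInv_nonneg hδ.le))
    ((continuous_cutoffInv hδ).intervalIntegrable _ _)

end cutoffInv

lemma integral_pi_Ioo_comp_eval {ι : Type*} [Fintype ι] [DecidableEq ι] (φ : ℝ → ℝ) (i₀ : ι)
    {R : ℝ} (hR : 0 ≤ R) :
    ∫ x in univ.pi fun _ : ι => Ioo (-R) R, φ (x i₀) =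
      (2 * R) ^ (Fintype.card ι - 1) * ∫ t in Ioo (-R) R, φ t := by
  set f : ι → ℝ → ℝ := fun i => if i = i₀ then φ else fun _ => 1
  have hprod : ∀ x : ι → ℝ, φ (x i₀) = ∏ i, f i (x i) := fun x => by
    rw [Fintype.prod_eq_single i₀ fun i hi => by simp only [f, if_neg hi]]
    simp only [f, if_true]
  have hlen : ∀ i ∈ ({i₀}ᶜ : Finset ι), ∫ t in Ioo (-R) R, f i t = 2 * R := by
    intro i hi
    rw [Finset.mem_compl, Finset.mem_singleton] at hi
    simp only [f, if_neg hi]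
    rw [setIntegral_const, Real.volume_real_Ioo_of_le (by linarith), smul_eq_mul, mul_one]
    ring
  simp_rw [hprod]
  rw [volume_pi, Measure.restrict_pi_pi, integral_fintype_prod_eq_prod,
    Fintype.prod_eq_mul_prod_compl i₀, Finset.prod_congr rfl hlen, Finset.prod_const,
    Finset.card_compl, Finset.card_singleton, mul_comm]
  simp only [f, if_true]

theorem setIntegral_ball_comp_inner_le {E : Type*} [NormedAddCommGroup E]
    [InnerProductSpace ℝ E] [FiniteDimensional ℝ E] [MeasurableSpace E] [BorelSpace E]
    {φ : ℝ → ℝ} (hφ : Continuous φ) (hφ0 : ∀ t, 0 ≤ φ t) {p : E} (hp : ‖p‖ = 1) {R : ℝ}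
    (hR : 0 ≤ R) :
    ∫ v in ball 0 R, φ ⟪v, p⟫ ≤ (2 * R) ^ (finrank ℝ E - 1) * ∫ t in -R..R, φ t := by
  have : Nontrivial E := ⟨⟨p, 0, by rintro rfl; simp at hp⟩⟩
  set i₀ : Fin (finrank ℝ E) := ⟨0, finrank_pos⟩
  obtain ⟨b, hb⟩ := Orthonormal.exists_orthonormalBasis_extension_of_card_eq
    (Fintype.card_fin _).symm (v := fun _ => p) (s := {i₀})
    ⟨fun _ => hp, fun i j hij => absurd (Subtype.ext (i.2.trans j.2.symm)) hij⟩
  set e : E ≃ᵐ (Fin (finrank ℝ E) → ℝ) :=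
    b.measurableEquiv.trans (MeasurableEquiv.toLp 2 _).symm
  have he : MeasurePreserving e volume volume :=
    (EuclideanSpace.volume_preserving_symm_measurableEquiv_toLp _).comp
      b.measurePreserving_measurableEquiv
  have he_apply : ∀ v, e v i₀ = ⟪v, p⟫ := fun v => by
    rw [real_inner_comm, ← hb i₀ rfl]
    exact b.repr_apply_apply v i₀
  set cube := univ.pi fun _ : Fin (finrank ℝ E) => Ioo (-R) R
  have hball : ball (0 : E) R ⊆ e ⁻¹' cube := fun v hv i _ => by
    have := (PiLp.norm_apply_le (b.repr v) i).trans_lt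
      ((b.repr.norm_map v).trans_lt (mem_ball_zero_iff.1 hv))
    exact abs_lt.1 this
  have hint : IntegrableOn (fun x : Fin (finrank ℝ E) → ℝ => φ (x i₀)) cube :=
    ((hφ.comp (continuous_apply i₀)).continuousOn.integrableOn_compact
      (isCompact_univ_pi fun _ => isCompact_Icc)).mono_set
      (pi_mono fun _ _ => Ioo_subset_Icc_self)
  calc ∫ v in ball 0 R, φ ⟪v, p⟫ = ∫ v in ball 0 R, φ (e v i₀) := by simp_rw [he_apply]
    _ ≤ ∫ v in e ⁻¹' cube, φ (e v i₀) :=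
      setIntegral_mono_set ((he.integrableOn_comp_preimage e.measurableEmbedding).2 hint)
        (Filter.Eventually.of_forall fun _ => hφ0 _) (Filter.Eventually.of_forall hball)
    _ = ∫ x in cube, φ (x i₀) :=
      he.setIntegral_preimage_emb e.measurableEmbedding (fun x => φ (x i₀)) cube
    _ = (2 * R) ^ (finrank ℝ E - 1) * ∫ t in -R..R, φ t := by
      rw [integral_pi_Ioo_comp_eval φ i₀ hR, Fintype.card_fin,
        intervalIntegral.integral_of_le (by linarith), integral_Ioc_eq_integral_Ioo]

instance : IsFiniteMeasure sphμ := by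
  unfold sphμ
  infer_instance

lemma sphμ_real_univ : sphμ.real univ = 2 * π := by
  rw [measureReal_def, sphμ, Measure.toSphere_apply_univ, finrank_euclideanSpace_fin,
    EuclideanSpace.volume_ball_fin_two]
  simp [ENNReal.toReal_mul, pi_nonneg]

lemma inner_scat_of_inner_eq_zero {ν p : E2} (h : ⟪ν, p⟫ = 0) (vbar v : E2) :
    ⟪scat vbar v ν, p⟫ = ⟪v, p⟫ := by
  rw [scat, inner_sub_left, real_inner_smul_left, h, mul_zero, sub_zero]

lemma exists_norm_eq_one_inner_eq_zero {ν : E2} (hν : ‖ν‖ = 1) :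
    ∃ p : E2, ‖p‖ = 1 ∧ ⟪ν, p⟫ = 0 := by
  obtain ⟨b, hb⟩ := Orthonormal.exists_orthonormalBasis_extension_of_card_eq
    (by simp : finrank ℝ E2 = Fintype.card (Fin 2)) (v := fun _ => ν) (s := {(0 : Fin 2)})
    ⟨fun _ => hν, fun i j hij => absurd (Subtype.ext (i.2.trans j.2.symm)) hij⟩
  refine ⟨b 1, b.orthonormal.1 1, ?_⟩
  rw [← hb 0 rfl]
  exact b.orthonormal.2 (by decide)

lemma one_add_log_two_mul_div_le {R δ : ℝ} (hR : 1 ≤ R) (hδ : 0 < δ) :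
    1 + log (2 * R / δ) ≤ 2 * R + |log δ| := by
  rw [log_div (by positivity) hδ.ne', log_mul two_ne_zero (by positivity)]
  have hlog2 := log_le_sub_one_of_pos two_pos
  have hlogR := log_le_sub_one_of_pos (zero_lt_one.trans_le hR)
  have := neg_le_abs (log δ)
  linarith

lemma integral_ball_scat_le {R δ : ℝ} (hδ : 0 < δ) (hδR : δ ≤ 2 * R) {vbar vj ν : E2}
    (hvbar : ‖vbar‖ ≤ R) (hvj : ‖vj‖ ≤ R) (hν : ‖ν‖ = 1) :
    ∫ v in ball (0 : E2) R, min (δ / ‖scat vbar v ν - vj‖) 1 * |⟪v - vbar, ν⟫| ≤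
      8 * R ^ 2 * δ * (1 + log (2 * R / δ)) := by
  obtain ⟨p, hp, hνp⟩ := exists_norm_eq_one_inner_eq_zero hν
  have hR : 0 ≤ R := (norm_nonneg _).trans hvbar
  set c := ⟪vj, p⟫
  set ψ : ℝ → ℝ := fun t => cutoffInv δ (t - c)
  have hψ : Continuous ψ := (continuous_cutoffInv hδ).comp (continuous_id.sub continuous_const)
  have hpointwise : ∀ v ∈ ball (0 : E2) R,
      min (δ / ‖scat vbar v ν - vj‖) 1 * |⟪v - vbar, ν⟫| ≤ 2 * R * ψ ⟪v, p⟫ := by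
    intro v hv
    have hcoord : |⟪v, p⟫ - c| ≤ ‖scat vbar v ν - vj‖ := by
      rw [← inner_scat_of_inner_eq_zero hνp vbar v, ← inner_sub_left]
      simpa [hp] using abs_real_inner_le_norm (scat vbar v ν - vj) p
    have hnormal : |⟪v - vbar, ν⟫| ≤ 2 * R := by
      have := mem_ball_zero_iff.1 hv
      calc |⟪v - vbar, ν⟫| ≤ ‖v - vbar‖ := by
            simpa [hν] using abs_real_inner_le_norm (v - vbar) ν
        _ ≤ ‖v‖ + ‖vbar‖ := norm_sub_le v vbar
        _ ≤ 2 * R := by linarith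
    rw [mul_comm (2 * R)]
    exact mul_le_mul (min_div_le_cutoffInv hδ hcoord) hnormal (abs_nonneg _)
      (cutoffInv_nonneg hδ.le _)
  have hint : IntegrableOn (fun v : E2 => 2 * R * ψ ⟪v, p⟫) (ball 0 R) :=
    ((continuous_const.mul (hψ.comp (continuous_id.inner continuous_const))).continuousOn
      |>.integrableOn_compact (isCompact_closedBall 0 R)).mono_set ball_subset_closedBall
  calc ∫ v in ball (0 : E2) R, min (δ / ‖scat vbar v ν - vj‖) 1 * |⟪v - vbar, ν⟫|
      ≤ ∫ v in ball (0 : E2) R, 2 * R * ψ ⟪v, p⟫ :=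
        integral_mono_of_nonneg (Filter.Eventually.of_forall fun _ => by positivity) hint
          (ae_restrict_of_forall_mem measurableSet_ball hpointwise)
    _ = 2 * R * ∫ v in ball (0 : E2) R, ψ ⟪v, p⟫ := integral_const_mul _ _
    _ ≤ 2 * R * ((2 * R) ^ (finrank ℝ E2 - 1) * ∫ t in -R..R, ψ t) := by
        gcongr
        exact setIntegral_ball_comp_inner_le hψ (fun _ => cutoffInv_nonneg hδ.le _) hp hR
    _ ≤ 2 * R * (2 * R * (2 * δ * (1 + log (2 * R / δ)))) := by
        have hc : |c| ≤ R := (abs_real_inner_le_norm vj p).trans (by rw [hp, mul_one]; exact hvj)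
        rw [finrank_euclideanSpace_fin, show 2 - 1 = 1 from rfl, pow_one]
        exact mul_le_mul_of_nonneg_left (mul_le_mul_of_nonneg_left
          (integral_cutoffInv_sub_le hδ hc hδR) (by positivity)) (by positivity)
    _ = 8 * R ^ 2 * δ * (1 + log (2 * R / δ)) := by ring

/-- Integrating a logarithmic-scale singularity through scattering:
`∫ min(δ/|v_i - v_j|, 1) |(v* - v̄_i)·ν*| dv* dν* ≤ C R² δ |log δ| + C R³ δ`. -/
theorem statement10 :
    ∃ C : ℝ, 0 < C ∧
      ∀ (R δ : ℝ) (vbar vj : E2), 1 < R → 0 < δ → δ < 1 → ‖vbar‖ ≤ R → ‖vj‖ ≤ R →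
        (∫ ν : sphere (0 : E2) 1, ∫ v in Metric.ball (0 : E2) R,
            min (δ / ‖scat vbar v (ν : E2) - vj‖) 1 * |⟪v - vbar, (ν : E2)⟫| ∂volume ∂sphμ)
          ≤ C * R ^ 2 * δ * |Real.log δ| + C * R ^ 3 * δ := by
  refine ⟨128, by norm_num, fun R δ vbar vj hR hδ0 hδ1 hvbar hvj => ?_⟩
  set B := 8 * R ^ 2 * δ * (2 * R + |log δ|)
  have hbound : ∀ ν : sphere (0 : E2) 1, ∫ v in ball (0 : E2) R,
      min (δ / ‖scat vbar v ν - vj‖) 1 * |⟪v - vbar, (ν : E2)⟫| ≤ B := fun ν =>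
    (integral_ball_scat_le hδ0 (by linarith) hvbar hvj (norm_eq_of_mem_sphere ν)).trans
      (mul_le_mul_of_nonneg_left (one_add_log_two_mul_div_le hR.le hδ0) (by positivity))
  calc (∫ ν : sphere (0 : E2) 1, ∫ v in ball (0 : E2) R,
          min (δ / ‖scat vbar v ν - vj‖) 1 * |⟪v - vbar, (ν : E2)⟫| ∂volume ∂sphμ)
      ≤ ∫ _ : sphere (0 : E2) 1, B ∂sphμ :=
        integral_mono_of_nonneg (Filter.Eventually.of_forall fun _ =>
          setIntegral_nonneg measurableSet_ball fun _ _ => by positivity)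
          (integrable_const B) (Filter.Eventually.of_forall hbound)
    _ = 2 * π * B := by rw [integral_const, smul_eq_mul, sphμ_real_univ]
    _ ≤ 128 * R ^ 2 * δ * |log δ| + 128 * R ^ 3 * δ := by
        have : 0 ≤ R ^ 2 * δ * |log δ| := by positivity
        nlinarith [pi_le_four, show 0 ≤ B by positivity]
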